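/- Let f ∈ ℝ[x₁,…,xₙ] be coercive on ℝⁿ. Then f fulfills conditions (C1), (C2) and (C3); that is, every vertex at infinity of New∞(f) lies in (2ℕ₀)ⁿ, the coefficient of f at every vertex at infinity is positive, and for every i ∈ {1,…,n} the set V(f) contains a vector of the form 2k_i e_i with k_i ∈ ℕ. -/

import Mathlib

open MvPolynomial Filter

noncomputable section

open scoped Classical

/-- The embedding of exponent vectors into `ℝⁿ`. -/
def expEmbed {n : ℕ} (α : Fin n →₀ ℕ) : Fin n → ℝ := fun i => (α i : ℝ)

/-- The Newton polytope at infinity `New∞(f) = conv(A(f) ∪ {0})`. -/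
def newtonInfty {n : ℕ} (f : MvPolynomial (Fin n) ℝ) : Set (Fin n → ℝ) :=
  convexHull ℝ (expEmbed '' ((insert 0 f.support : Finset (Fin n →₀ ℕ)) : Set (Fin n →₀ ℕ)))

/-- The vertex set `V₀(f)` of the Newton polytope at infinity, as a
finset of exponent vectors. -/
def V0 {n : ℕ} (f : MvPolynomial (Fin n) ℝ) : Finset (Fin n →₀ ℕ) :=
  (insert 0 f.support).filter fun α => expEmbed α ∈ Set.extremePoints ℝ (newtonInfty f)

/-- The set `V(f) = V₀(f) \ {0}` of vertices at infinity. -/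
def Vinf {n : ℕ} (f : MvPolynomial (Fin n) ℝ) : Finset (Fin n →₀ ℕ) := (V0 f).erase 0

/-- An exponent vector with all entries even, i.e. a member of `(2ℕ₀)ⁿ`. -/
def IsEvenExp {n : ℕ} (α : Fin n →₀ ℕ) : Prop := ∀ i, Even (α i)

/-- Condition (C1): `V(f) ⊆ (2ℕ₀)ⁿ`. -/
def CondC1 {n : ℕ} (f : MvPolynomial (Fin n) ℝ) : Prop := ∀ α ∈ Vinf f, IsEvenExp α

/-- Condition (C2): positive coefficients at all vertices at infinity. -/
def CondC2 {n : ℕ} (f : MvPolynomial (Fin n) ℝ) : Prop := ∀ α ∈ Vinf f, 0 < f.coeff α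

/-- Condition (C3): `V(f)` contains a vector `2 kᵢ eᵢ` for every `i`. -/
def CondC3 {n : ℕ} (f : MvPolynomial (Fin n) ℝ) : Prop :=
  ∀ i : Fin n, ∃ k : ℕ, 0 < k ∧ Finsupp.single i (2 * k) ∈ Vinf f

/-- An exponent vector of `f` is gem degenerate if it is no vertex at infinity but lies in
some nonempty face of `New∞(f)` not containing the origin. -/
def IsGemDegenerate {n : ℕ} (f : MvPolynomial (Fin n) ℝ) (α : Fin n →₀ ℕ) : Prop :=
  α ∈ f.support ∧ α ∉ Vinf f ∧
    ∃ G : Set (Fin n → ℝ), G.Nonempty ∧ IsExtreme ℝ (newtonInfty f) G ∧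
      (0 : Fin n → ℝ) ∉ G ∧ expEmbed α ∈ G

/-- The set `D(f)` of gem degenerate exponent vectors of `f`. -/
def Dfin {n : ℕ} (f : MvPolynomial (Fin n) ℝ) : Finset (Fin n →₀ ℕ) :=
  f.support.filter fun α => IsGemDegenerate f α

/-- `f` is gem regular if `D(f) = ∅`. -/
def GemRegular {n : ℕ} (f : MvPolynomial (Fin n) ℝ) : Prop := ∀ α, ¬ IsGemDegenerate f α

/-- `V₀ᶜ(f) = A(f) \ V₀(f)`. -/
def V0c {n : ℕ} (f : MvPolynomial (Fin n) ℝ) : Finset (Fin n →₀ ℕ) := f.support \ V0 f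

/-- A map of minimal barycentric coordinates of `f`. -/
def IsMinBary {n : ℕ} (f : MvPolynomial (Fin n) ℝ)
    (lam : (Fin n →₀ ℕ) → (Fin n →₀ ℕ) → ℝ) : Prop :=
  (∀ αs α, 0 ≤ lam αs α ∧ lam αs α ≤ 1) ∧
  ∀ αs ∈ V0c f, ∃ W : Finset (Fin n →₀ ℕ), W ⊆ V0 f ∧
    AffineIndependent ℝ (fun w : W => expEmbed (w : Fin n →₀ ℕ)) ∧
    (∀ α ∈ W, 0 < lam αs α) ∧
    (∀ α ∈ V0 f, α ∉ W → lam αs α = 0) ∧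
    (∑ α ∈ W, lam αs α) = 1 ∧
    (∑ α ∈ W, lam αs α • expEmbed α) = expEmbed αs

/-- `W_{α*}(λ_f)`, the minimal vertex representation of `α*` corresponding to `λ_f`. -/
def Wfin {n : ℕ} (f : MvPolynomial (Fin n) ℝ)
    (lam : (Fin n →₀ ℕ) → (Fin n →₀ ℕ) → ℝ) (αs : Fin n →₀ ℕ) : Finset (Fin n →₀ ℕ) :=
  (V0 f).filter fun α => 0 < lam αs α

/-- The circuit number `Θ(f, λ_f, α*)`. -/
def circuitNumber {n : ℕ} (f : MvPolynomial (Fin n) ℝ)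
    (lam : (Fin n →₀ ℕ) → (Fin n →₀ ℕ) → ℝ) (αs : Fin n →₀ ℕ) : ℝ :=
  ∏ α ∈ Wfin f lam αs, (f.coeff α / lam αs α) ^ (lam αs α)

/-- `g` is coercive on `ℝⁿ`: `g(x) → +∞` whenever `‖x‖ → +∞`. -/
def Coercive {n : ℕ} (g : (Fin n → ℝ) → ℝ) : Prop :=
  Tendsto g (comap (fun x : Fin n → ℝ => ‖x‖) atTop) atTop

/-!
If `w` exposes a vertex `α` of `New∞(f)`, then along the monomial curve `t ↦ (εⱼ t^{wⱼ})ⱼ` the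
monomial `x^α` dominates: `f(x(t)) ~ f_α ε^α t^{⟨w, α⟩}`. Coercivity makes the left side tend to
`+∞`, so `f_α ε^α > 0` for every sign vector `ε`; taking `ε = 1` gives (C2), and flipping the sign
of the `i`-th coordinate gives that `αᵢ` is even, i.e. (C1). For (C3), `f` restricted to the
`i`-th axis is a coercive polynomial in one variable, so `f` contains a pure power `xᵢᵏ`, `k > 0`;
the largest one is exposed by a weight that rewards `xᵢ` and penalises every other variable, hence
it is a vertex at infinity, and it is even by (C1).
-/

section ExtremePoints

theorem eq_or_lt_of_mem_convexHull_of_forall_lt {𝕜 E : Type*} [Field 𝕜] [LinearOrder 𝕜]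
    [IsStrictOrderedRing 𝕜] [AddCommGroup E] [Module 𝕜 E] {S : Set E} {a : E} (ha : a ∈ S)
    (l : E →ₗ[𝕜] 𝕜) (hl : ∀ b ∈ S, b ≠ a → l b < l a) :
    ∀ y ∈ convexHull 𝕜 S, y = a ∨ l y < l a := by
  rcases (S \ {a}).eq_empty_or_nonempty with hempty | hne
  · have hS : S = {a} := (Set.sdiff_eq_empty.1 hempty).antisymm (Set.singleton_subset_iff.2 ha)
    simp [hS]
  have hH : convexHull 𝕜 (S \ {a}) ⊆ {y | l y < l a} :=
    convexHull_min (fun b hb => hl b hb.1 hb.2) (convex_halfSpace_lt l.isLinear _)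
  intro y hy
  rw [← Set.insert_eq_of_mem ha, ← Set.insert_sdiff_singleton, convexHull_insert hne,
    mem_convexJoin] at hy
  obtain ⟨a', ha', z, hz, μ, ν, -, hν, hμν, rfl⟩ := hy
  rw [Set.mem_singleton_iff] at ha'
  subst a'
  rcases hν.eq_or_lt with rfl | hν
  · left
    simp [show μ = 1 by simpa using hμν]
  · right
    calc l (μ • a + ν • z) = μ * l a + ν * l z := by simp
      _ < μ * l a + ν * l a := by gcongr; exact hH hz
      _ = l a := by rw [← add_mul, hμν, one_mul]

variable {E : Type*} [TopologicalSpace E] [AddCommGroup E] [Module ℝ E]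
  [IsTopologicalAddGroup E] [ContinuousSMul ℝ E] [LocallyConvexSpace ℝ E] [T2Space E]

theorem mem_extremePoints_convexHull_iff_exists_dual {S : Set E} (hS : S.Finite) {a : E} :
    a ∈ (convexHull ℝ S).extremePoints ℝ ↔
      a ∈ S ∧ ∃ l : StrongDual ℝ E, ∀ b ∈ S, b ≠ a → l b < l a := by
  constructor
  · intro ha
    have hsep : a ∉ convexHull ℝ (S \ {a}) := fun h =>
      ((convex_convexHull ℝ S).mem_extremePoints_iff_mem_sdiff_convexHull_sdiff.1 ha).2
        (convexHull_mono (Set.sdiff_subset_sdiff_left (subset_convexHull ℝ S)) h)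
    obtain ⟨l, u, hla, hlb⟩ := geometric_hahn_banach_point_closed (convex_convexHull ℝ _)
      (hS.sdiff.isCompact_convexHull ℝ).isClosed hsep
    refine ⟨extremePoints_convexHull_subset ha, -l, fun b hb hba => ?_⟩
    have := hlb b (subset_convexHull ℝ _ ⟨hb, hba⟩)
    simp only [neg_apply, neg_lt_neg_iff]
    linarith
  · rintro ⟨haS, l, hl⟩
    refine exposedPoints_subset_extremePoints ⟨subset_convexHull ℝ S haS, l, fun y hy => ?_⟩
    rcases eq_or_lt_of_mem_convexHull_of_forall_lt haS l hl y hy with rfl | hy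
    · simp
    · exact ⟨hy.le, fun h => absurd h hy.not_ge⟩

end ExtremePoints

theorem mem_extremePoints_convexHull_iff_exists_dotProduct_lt {ι : Type*} [Fintype ι]
    [DecidableEq ι] {S : Set (ι → ℝ)} (hS : S.Finite) {a : ι → ℝ} :
    a ∈ (convexHull ℝ S).extremePoints ℝ ↔
      a ∈ S ∧ ∃ w : ι → ℝ, ∀ b ∈ S, b ≠ a → w ⬝ᵥ b < w ⬝ᵥ a := by
  rw [mem_extremePoints_convexHull_iff_exists_dual hS]
  refine and_congr_right fun _ => ⟨fun ⟨l, hl⟩ => ?_, fun ⟨w, hw⟩ => ?_⟩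
  · refine ⟨(dotProductEquiv ℝ ι).symm (l : (ι → ℝ) →ₗ[ℝ] ℝ), fun b hb hba => ?_⟩
    have h := fun x => LinearMap.congr_fun
      ((dotProductEquiv ℝ ι).apply_symm_apply (l : (ι → ℝ) →ₗ[ℝ] ℝ)) x
    simp only [dotProductEquiv_apply_apply, ContinuousLinearMap.coe_coe] at h
    simpa [h] using hl b hb hba
  · exact ⟨LinearMap.toContinuousLinearMap (dotProductEquiv ℝ ι w), by simpa using hw⟩

theorem expEmbed_injective {n : ℕ} : Function.Injective (expEmbed (n := n)) :=
  fun _ _ h => Finsupp.ext fun i => Nat.cast_injective (congrFun h i)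

@[simp]
theorem expEmbed_zero {n : ℕ} : expEmbed (0 : Fin n →₀ ℕ) = 0 :=
  funext fun _ => Nat.cast_zero

theorem mem_Vinf_iff {n : ℕ} {f : MvPolynomial (Fin n) ℝ} {α : Fin n →₀ ℕ} :
    α ∈ Vinf f ↔ α ∈ f.support ∧ α ≠ 0 ∧ ∃ w : Fin n → ℝ,
      ∀ β ∈ insert 0 f.support, β ≠ α → w ⬝ᵥ expEmbed β < w ⬝ᵥ expEmbed α := by
  simp only [Vinf, V0, newtonInfty, Finset.mem_erase, Finset.mem_filter,
    mem_extremePoints_convexHull_iff_exists_dotProduct_lt (Set.toFinite _),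
    expEmbed_injective.mem_set_image, Set.forall_mem_image, expEmbed_injective.ne_iff,
    Finset.mem_coe, Finset.mem_insert]
  tauto

open scoped Topology

def monomialCurve {ι : Type*} (ε w : ι → ℝ) (t : ℝ) : ι → ℝ := fun j => ε j * t ^ w j

theorem tendsto_norm_monomialCurve {ι : Type*} [Fintype ι] {ε w : ι → ℝ} {i : ι}
    (hε : ε i ≠ 0) (hw : 0 < w i) :
    Tendsto (fun t => ‖monomialCurve ε w t‖) atTop atTop := by
  refine tendsto_atTop_mono' atTop ?_ ((tendsto_rpow_atTop hw).const_mul_atTop (abs_pos.2 hε))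
  filter_upwards [eventually_ge_atTop 0] with t ht
  calc |ε i| * t ^ w i = ‖monomialCurve ε w t i‖ := by
        simp [monomialCurve, abs_of_nonneg (Real.rpow_nonneg ht _)]
    _ ≤ ‖monomialCurve ε w t‖ := norm_le_pi_norm _ i

theorem eval_monomialCurve {n : ℕ} (f : MvPolynomial (Fin n) ℝ) (ε w : Fin n → ℝ) {t : ℝ}
    (ht : 0 < t) : eval (monomialCurve ε w t) f =
      ∑ β ∈ f.support, f.coeff β * (∏ j, ε j ^ β j) * t ^ (w ⬝ᵥ expEmbed β) := by
  rw [eval_eq']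
  refine Finset.sum_congr rfl fun β _ => ?_
  simp only [monomialCurve, mul_pow, Finset.prod_mul_distrib, mul_assoc]
  congr 2
  rw [dotProduct, Real.rpow_sum_of_pos ht]
  refine Finset.prod_congr rfl fun j _ => ?_
  rw [← Real.rpow_natCast, ← Real.rpow_mul ht.le, expEmbed]

theorem tendsto_eval_monomialCurve_mul_rpow {n : ℕ} (f : MvPolynomial (Fin n) ℝ)
    (ε w : Fin n → ℝ) {α : Fin n →₀ ℕ}
    (hα : ∀ β ∈ f.support, β ≠ α → w ⬝ᵥ expEmbed β < w ⬝ᵥ expEmbed α) :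
    Tendsto (fun t => eval (monomialCurve ε w t) f * t ^ (-(w ⬝ᵥ expEmbed α))) atTop
      (𝓝 (f.coeff α * ∏ j, ε j ^ α j)) := by
  set d := w ⬝ᵥ expEmbed α
  have hlim : Tendsto (fun t : ℝ => ∑ β ∈ f.support,
      f.coeff β * (∏ j, ε j ^ β j) * t ^ (w ⬝ᵥ expEmbed β - d)) atTop
      (𝓝 (∑ β ∈ f.support, if β = α then f.coeff β * ∏ j, ε j ^ β j else 0)) := by
    refine tendsto_finsetSum _ fun β hβ => ?_
    split_ifs with h
    · simp [h, d]
    · simpa using (tendsto_rpow_neg_atTop (sub_pos.2 (hα β hβ h))).const_mul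
        (f.coeff β * ∏ j, ε j ^ β j)
  have hcoeff : (if α ∈ f.support then f.coeff α * ∏ j, ε j ^ α j else 0) =
      f.coeff α * ∏ j, ε j ^ α j := by
    split_ifs with h
    · rfl
    · rw [notMem_support_iff.1 h, zero_mul]
  rw [Finset.sum_ite_eq', hcoeff] at hlim
  refine hlim.congr' ?_
  filter_upwards [eventually_gt_atTop 0] with t ht
  rw [eval_monomialCurve f ε w ht, Finset.sum_mul]
  refine Finset.sum_congr rfl fun β _ => ?_
  rw [Real.rpow_sub ht, Real.rpow_neg ht.le, div_eq_mul_inv]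
  ring

theorem coeff_mul_prod_pos_of_coercive {n : ℕ} {f : MvPolynomial (Fin n) ℝ}
    (hcoer : Coercive fun x => eval x f) {α : Fin n →₀ ℕ} (hα : α ∈ f.support)
    {w : Fin n → ℝ} (hpos : 0 < w ⬝ᵥ expEmbed α)
    (hdom : ∀ β ∈ f.support, β ≠ α → w ⬝ᵥ expEmbed β < w ⬝ᵥ expEmbed α)
    {ε : Fin n → ℝ} (hε : ∀ j, ε j ≠ 0) :
    0 < f.coeff α * ∏ j, ε j ^ α j := by
  obtain ⟨i, hi⟩ : ∃ i, 0 < w i := by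
    by_contra! hw
    exact hpos.not_ge <| Finset.sum_nonpos fun i _ =>
      mul_nonpos_of_nonpos_of_nonneg (hw i) (Nat.cast_nonneg _)
  have hinf : Tendsto (fun t => eval (monomialCurve ε w t) f) atTop atTop :=
    hcoer.comp (tendsto_comap_iff.2 (tendsto_norm_monomialCurve (hε i) hi))
  have hnonneg : 0 ≤ f.coeff α * ∏ j, ε j ^ α j := by
    refine ge_of_tendsto (tendsto_eval_monomialCurve_mul_rpow f ε w hdom) ?_
    filter_upwards [hinf.eventually_ge_atTop 0, eventually_gt_atTop 0] with t hf ht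
    exact mul_nonneg hf (Real.rpow_nonneg ht.le _)
  refine hnonneg.lt_of_ne' (mul_ne_zero (mem_support_iff.1 hα) ?_)
  exact Finset.prod_ne_zero_iff.2 fun j _ => pow_ne_zero _ (hε j)

theorem coeff_mul_prod_pos_of_mem_Vinf {n : ℕ} {f : MvPolynomial (Fin n) ℝ}
    (hcoer : Coercive fun x => eval x f) {α : Fin n →₀ ℕ} (hα : α ∈ Vinf f)
    {ε : Fin n → ℝ} (hε : ∀ j, ε j ≠ 0) :
    0 < f.coeff α * ∏ j, ε j ^ α j := by
  obtain ⟨hsupp, hα0, w, hw⟩ := mem_Vinf_iff.1 hα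
  refine coeff_mul_prod_pos_of_coercive hcoer hsupp ?_
    (fun β hβ => hw β (Finset.mem_insert_of_mem hβ)) hε
  simpa using hw 0 (Finset.mem_insert_self _ _) hα0.symm

theorem condC2_of_coercive {n : ℕ} {f : MvPolynomial (Fin n) ℝ}
    (hcoer : Coercive fun x => eval x f) : CondC2 f := fun α hα => by
  simpa using coeff_mul_prod_pos_of_mem_Vinf hcoer hα (ε := 1) fun _ => one_ne_zero

theorem condC1_of_coercive {n : ℕ} {f : MvPolynomial (Fin n) ℝ}
    (hcoer : Coercive fun x => eval x f) : CondC1 f := by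
  intro α hα i
  have h := coeff_mul_prod_pos_of_mem_Vinf hcoer hα (ε := Function.update 1 i (-1))
    fun j => by by_cases hj : j = i <;> simp [hj]
  rw [Fintype.prod_eq_single i fun j hj => by simp [hj], Function.update_self] at h
  have hsign := (pos_iff_pos_of_mul_pos h).1 (condC2_of_coercive hcoer α hα)
  rcases Nat.even_or_odd (α i) with he | ho
  · exact he
  · rw [ho.neg_one_pow] at hsign
    norm_num at hsign

theorem exists_single_mem_support_of_coercive {n : ℕ} {f : MvPolynomial (Fin n) ℝ}
    (hcoer : Coercive fun x => eval x f) (i : Fin n) :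
    ∃ k ≠ 0, Finsupp.single i k ∈ f.support := by
  by_contra! h
  have hconst : ∀ t : ℝ, eval (Pi.single i t) f = eval 0 f := by
    intro t
    rw [eval_eq', eval_eq']
    refine Finset.sum_congr rfl fun β hβ => ?_
    by_cases hβ0 : β = 0
    · simp [hβ0]
    obtain ⟨j, hji, hj⟩ : ∃ j ≠ i, β j ≠ 0 := by
      by_contra! hax
      have hsingle : β = Finsupp.single i (β i) :=
        Finsupp.support_subset_singleton.1 fun j hj => by_contra fun hji => by simp_all
      exact h (β i) (fun h0 => hβ0 (by rw [hsingle, h0, Finsupp.single_zero])) (hsingle ▸ hβ)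
    rw [Finset.prod_eq_zero (Finset.mem_univ j) (by simp [hji, hj]),
      Finset.prod_eq_zero (Finset.mem_univ j) (by simp [hj])]
  have hinf : Tendsto (fun t : ℝ => eval (Pi.single i t) f) atTop atTop :=
    hcoer.comp (tendsto_comap_iff.2 (by simpa [Function.comp_def, Pi.norm_single]
      using tendsto_abs_atTop_atTop))
  simp only [hconst] at hinf
  exact not_tendsto_const_atTop _ _ hinf

theorem update_dotProduct_expEmbed {n : ℕ} (i : Fin n) (c : ℝ) (β : Fin n →₀ ℕ) :
    Function.update (fun _ => c) i 1 ⬝ᵥ expEmbed β =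
      β i + c * ∑ j ∈ Finset.univ.erase i, (β j : ℝ) := by
  rw [dotProduct, ← Finset.add_sum_erase _ _ (Finset.mem_univ i), Finset.mul_sum]
  simp only [Function.update_self, one_mul, expEmbed]
  congr 1
  exact Finset.sum_congr rfl fun j hj => by rw [Function.update_of_ne (Finset.ne_of_mem_erase hj)]

theorem single_mem_Vinf_of_forall_le {n : ℕ} {f : MvPolynomial (Fin n) ℝ} {i : Fin n} {m : ℕ}
    (hm : m ≠ 0) (hmem : Finsupp.single i m ∈ f.support)
    (hmax : ∀ k, Finsupp.single i k ∈ f.support → k ≤ m) :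
    Finsupp.single i m ∈ Vinf f := by
  set B : ℕ := f.support.sup (· i)
  -- `B + 1` exceeds every `xᵢ`-degree in `f`, so monomials involving another variable get
  -- negative weight.
  refine mem_Vinf_iff.2 ⟨hmem, by simpa using hm,
    Function.update (fun _ => -((B : ℝ) + 1)) i 1, fun β hβ hne => ?_⟩
  rw [update_dotProduct_expEmbed, update_dotProduct_expEmbed]
  have hoff : ∑ j ∈ Finset.univ.erase i, ((Finsupp.single i m j : ℕ) : ℝ) = 0 :=
    Finset.sum_eq_zero fun j hj => by simp [Finset.ne_of_mem_erase hj]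
  rw [hoff, Finsupp.single_eq_same, mul_zero, add_zero]
  by_cases hax : ∀ j ∈ Finset.univ.erase i, β j = 0
  · rw [Finset.sum_eq_zero fun j hj => by simp [hax j hj], mul_zero, add_zero]
    have hsingle : β = Finsupp.single i (β i) := Finsupp.support_subset_singleton.1 fun j hj =>
      by_contra fun hji => Finsupp.mem_support_iff.1 hj (hax j (by simpa using hji))
    rcases Finset.mem_insert.1 hβ with rfl | hβ
    · exact_mod_cast Nat.pos_of_ne_zero hm
    · have hβm : β i ≠ m := fun h => hne (hsingle.trans (by rw [h]))
      exact_mod_cast (hmax _ (hsingle ▸ hβ)).lt_of_ne hβm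
  · obtain ⟨j, hj, hβj⟩ := not_forall₂.1 hax
    have hsum : (1 : ℝ) ≤ ∑ j ∈ Finset.univ.erase i, (β j : ℝ) :=
      le_trans (by exact_mod_cast Nat.one_le_iff_ne_zero.2 hβj)
        (Finset.single_le_sum (fun j _ => Nat.cast_nonneg (β j)) hj)
    have hβB : (β i : ℝ) ≤ B := by
      rcases Finset.mem_insert.1 hβ with rfl | hβ
      · simp
      · exact_mod_cast Finset.le_sup (f := (· i)) hβ
    nlinarith

theorem exists_single_mem_Vinf_of_coercive {n : ℕ} {f : MvPolynomial (Fin n) ℝ}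
    (hcoer : Coercive fun x => eval x f) (i : Fin n) :
    ∃ m ≠ 0, Finsupp.single i m ∈ Vinf f := by
  obtain ⟨k, hk0, hk⟩ := exists_single_mem_support_of_coercive hcoer i
  set P : ℕ → Prop := fun k => Finsupp.single i k ∈ f.support
  have hbound : ∀ k, P k → k ≤ f.support.sup (· i) :=
    fun k hk => by simpa using Finset.le_sup (f := (· i)) hk
  set m := Nat.findGreatest P (f.support.sup (· i))
  have hm0 : m ≠ 0 := ((Nat.pos_of_ne_zero hk0).trans_le (Nat.le_findGreatest (hbound k hk) hk)).ne'
  have hmP : P m := Nat.findGreatest_spec (hbound k hk) hk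
  exact ⟨m, hm0, single_mem_Vinf_of_forall_le hm0 hmP
    fun k' hk' => Nat.le_findGreatest (hbound k' hk') hk'⟩

theorem condC3_of_coercive {n : ℕ} {f : MvPolynomial (Fin n) ℝ}
    (hcoer : Coercive fun x => eval x f) : CondC3 f := by
  intro i
  obtain ⟨m, hm0, hm⟩ := exists_single_mem_Vinf_of_coercive hcoer i
  obtain ⟨k, rfl⟩ : Even m := by simpa using condC1_of_coercive hcoer _ hm i
  exact ⟨k, by omega, by rwa [two_mul]⟩

/-- Theorem: necessary conditions for coercivity.
A coercive polynomial fulfills (C1), (C2) and (C3). -/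
theorem stmt4 {n : ℕ} (f : MvPolynomial (Fin n) ℝ)
    (hcoer : Coercive fun x => MvPolynomial.eval x f) :
    CondC1 f ∧ CondC2 f ∧ CondC3 f :=
  ⟨condC1_of_coercive hcoer, condC2_of_coercive hcoer, condC3_of_coercive hcoer⟩
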